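/- Let b > 1 and f > 1 (an incoming backward shock meets an incoming forward rarefaction head-on in the isentropic p-system). Then the unique B > 0 solving φ←(B) + bf·φ←(B/(bf)) + φ→(f) - f·φ←(b) = 0 satisfies 1 < B < bf; that is, the interaction always produces an outgoing backward shock and an outgoing forward rarefaction. -/
import Mathlib


open Real Set Filter Topology

/-- κ = √γ / α with α = (γ-1)/2. -/
noncomputable def kappa (γ : ℝ) : ℝ := Real.sqrt γ / ((γ - 1) / 2)

/-- The shock branch x ↦ √((1 - x^{-1/α})(x^{γ/α} - 1)), α = (γ-1)/2. -/
noncomputable def shockPart (γ : ℝ) (x : ℝ) : ℝ :=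
  Real.sqrt ((1 - x ^ (-(1 : ℝ) / ((γ - 1) / 2))) * (x ^ (γ / ((γ - 1) / 2)) - 1))

/-- Backward auxiliary function φ← : rarefaction branch κ(x-1) for x ≤ 1,
    shock branch for x ≥ 1 (they agree, with value 0, at x = 1). -/
noncomputable def phiB (γ : ℝ) (x : ℝ) : ℝ :=
  if x ≤ 1 then kappa γ * (x - 1) else shockPart γ x

/-- Forward auxiliary function φ→ : shock branch -√(...) for x ≤ 1,
    rarefaction branch κ(x-1) for x ≥ 1 (they agree, with value 0, at x = 1). -/
noncomputable def phiF (γ : ℝ) (x : ℝ) : ℝ :=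
  if x < 1 then -shockPart γ x else kappa γ * (x - 1)

lemma kappa_pos {γ : ℝ} (hγ : 1 < γ) : 0 < kappa γ := by
  unfold kappa
  have h1 : 0 < Real.sqrt γ := Real.sqrt_pos.mpr (by linarith)
  have h2 : 0 < (γ - 1) / 2 := by linarith
  positivity

lemma factor1_pos {γ : ℝ} (hγ : 1 < γ) {x : ℝ} (hx : 1 < x) :
    0 < 1 - x ^ (-(1 : ℝ) / ((γ - 1) / 2)) := by
  have hα : 0 < (γ - 1) / 2 := by linarith
  have : x ^ (-(1 : ℝ) / ((γ - 1) / 2)) < 1 :=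
    Real.rpow_lt_one_of_one_lt_of_neg hx (div_neg_of_neg_of_pos (by norm_num) hα)
  linarith

lemma factor2_pos {γ : ℝ} (hγ : 1 < γ) {x : ℝ} (hx : 1 < x) :
    0 < x ^ (γ / ((γ - 1) / 2)) - 1 := by
  have hα : 0 < (γ - 1) / 2 := by linarith
  have : (1:ℝ) < x ^ (γ / ((γ - 1) / 2)) :=
    Real.one_lt_rpow_iff_of_pos (by linarith)|>.mpr (Or.inl ⟨hx, by positivity⟩)
  linarith

lemma factor1_nonneg {γ : ℝ} (hγ : 1 < γ) {x : ℝ} (hx : 1 ≤ x) :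
    0 ≤ 1 - x ^ (-(1 : ℝ) / ((γ - 1) / 2)) := by
  have hα : 0 < (γ - 1) / 2 := by linarith
  have : x ^ (-(1 : ℝ) / ((γ - 1) / 2)) ≤ 1 :=
    Real.rpow_le_one_of_one_le_of_nonpos hx (by
      have : 0 < (1:ℝ) / ((γ-1)/2) := by positivity
      linarith [neg_div ((γ-1)/2) (1:ℝ)])
  linarith

lemma factor2_nonneg {γ : ℝ} (hγ : 1 < γ) {x : ℝ} (hx : 1 ≤ x) :
    0 ≤ x ^ (γ / ((γ - 1) / 2)) - 1 := by
  have hα : 0 < (γ - 1) / 2 := by linarith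
  have : (1:ℝ) ≤ x ^ (γ / ((γ - 1) / 2)) :=
    Real.one_le_rpow hx (by positivity)
  linarith

lemma shockPart_mono {γ : ℝ} (hγ : 1 < γ) {x y : ℝ} (hx : 1 ≤ x) (hxy : x ≤ y) :
    shockPart γ x ≤ shockPart γ y := by
  have hα : 0 < (γ - 1) / 2 := by linarith
  have hy : (1:ℝ) ≤ y := le_trans hx hxy
  unfold shockPart
  apply Real.sqrt_le_sqrt
  apply mul_le_mul
  · -- 1 - x^{-c} ≤ 1 - y^{-c}
    have h1 : y ^ (-(1 : ℝ) / ((γ - 1) / 2)) ≤ x ^ (-(1 : ℝ) / ((γ - 1) / 2)) := by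
      rw [neg_div, Real.rpow_neg (by linarith), Real.rpow_neg (by linarith)]
      have hp : (0:ℝ) < x ^ ((1:ℝ) / ((γ - 1) / 2)) := Real.rpow_pos_of_pos (by linarith) _
      have hle : x ^ ((1:ℝ) / ((γ - 1) / 2)) ≤ y ^ ((1:ℝ) / ((γ - 1) / 2)) :=
        Real.rpow_le_rpow (by linarith) hxy (by positivity)
      exact inv_anti₀ hp hle
    linarith
  · have : x ^ (γ / ((γ - 1) / 2)) ≤ y ^ (γ / ((γ - 1) / 2)) :=
      Real.rpow_le_rpow (by linarith) hxy (by positivity)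
    linarith
  · exact factor2_nonneg hγ hx
  · exact factor1_nonneg hγ hy

-- key strict inequality
lemma key {γ : ℝ} (hγ : 1 < γ) {b f : ℝ} (hb : 1 < b) (hf : 1 < f) :
    f * shockPart γ b < shockPart γ (b * f) := by
  have hα : 0 < (γ - 1) / 2 := by linarith
  set c : ℝ := -(1:ℝ) / ((γ - 1) / 2) with hc
  set e : ℝ := γ / ((γ - 1) / 2) with he
  have hbf : 1 < b * f := by nlinarith
  have he2 : (2:ℝ) < e := by
    rw [he, lt_div_iff₀ hα]; nlinarith
  -- pieces
  have A1 := factor1_pos hγ hb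
  have A2 := factor1_pos hγ hbf
  have B1 := factor2_pos hγ hb
  have B2 := factor2_pos hγ hbf
  rw [← hc] at A1 A2
  rw [← he] at B1 B2
  have hA : 1 - b ^ c ≤ 1 - (b*f) ^ c := by
    have : (b*f) ^ c ≤ b ^ c := by
      rw [hc, neg_div, Real.rpow_neg (by linarith), Real.rpow_neg (by nlinarith)]
      have hp : (0:ℝ) < b ^ ((1:ℝ) / ((γ - 1) / 2)) := Real.rpow_pos_of_pos (by linarith) _
      have hle : b ^ ((1:ℝ) / ((γ - 1) / 2)) ≤ (b*f) ^ ((1:ℝ) / ((γ - 1) / 2)) :=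
        Real.rpow_le_rpow (by linarith) (by nlinarith) (by positivity)
      exact inv_anti₀ hp hle
    linarith
  have hfe : f ^ (2:ℝ) < f ^ e := Real.rpow_lt_rpow_of_exponent_lt hf he2
  have hf2 : f ^ (2:ℝ) = f ^ 2 := by
    rw [show (2:ℝ) = ((2:ℕ):ℝ) by norm_num, Real.rpow_natCast]
  have hbe : (0:ℝ) < b ^ e := Real.rpow_pos_of_pos (by linarith) e
  have hmul : (b*f) ^ e = b ^ e * f ^ e :=
    Real.mul_rpow (by linarith) (by linarith)
  have hB : f ^ 2 * (b ^ e - 1) < (b*f) ^ e - 1 := by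
    rw [hmul]
    have h1 : (1:ℝ) < f ^ 2 := by nlinarith
    rw [hf2] at hfe
    nlinarith [mul_pos hbe (show (0:ℝ) < f ^ e - f ^ 2 by linarith)]
  -- combine
  have hQ : 0 ≤ (1 - b ^ c) * (b ^ e - 1) := by positivity
  have hprod : f ^ 2 * ((1 - b ^ c) * (b ^ e - 1)) <
      (1 - (b*f) ^ c) * ((b*f) ^ e - 1) := by
    have s1 := mul_lt_mul_of_pos_left hB A1
    have s2 := mul_le_mul_of_nonneg_right hA (le_of_lt B2)
    nlinarith [s1, s2]
  have hsb : shockPart γ b = Real.sqrt ((1 - b ^ c) * (b ^ e - 1)) := rfl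
  have hsbf : shockPart γ (b*f) = Real.sqrt ((1 - (b*f) ^ c) * ((b*f) ^ e - 1)) := rfl
  rw [hsb, hsbf]
  have hfsq : Real.sqrt (f ^ 2 * ((1 - b ^ c) * (b ^ e - 1))) =
      f * Real.sqrt ((1 - b ^ c) * (b ^ e - 1)) := by
    rw [show f ^ 2 * ((1 - b ^ c) * (b ^ e - 1)) =
        (f * Real.sqrt ((1 - b ^ c) * (b ^ e - 1))) ^ 2 by
      rw [mul_pow, Real.sq_sqrt (le_of_lt (mul_pos A1 B1))]]
    exact Real.sqrt_sq (by positivity)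
  rw [← hfsq]
  exact Real.sqrt_lt_sqrt (by positivity) hprod

lemma phiB_nonneg {γ : ℝ} (hγ : 1 < γ) {x : ℝ} (hx : 1 ≤ x) : 0 ≤ phiB γ x := by
  unfold phiB
  split_ifs with h
  · have : x = 1 := le_antisymm h hx
    simp [this]
  · exact Real.sqrt_nonneg _

/-- a head-on interaction of a backward shock (b > 1) and a forward
    rarefaction (f > 1) always produces an outgoing backward shock (B > 1) and an
    outgoing forward rarefaction (B < bf). -/
theorem headon_SR (γ : ℝ) (hγ : 1 < γ)
    (b f B : ℝ) (hb : 1 < b) (hf : 1 < f) (hB : 0 < B)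
    (heq : phiB γ B + b * f * phiB γ (B / (b * f)) + phiF γ f - f * phiB γ b = 0) :
    1 < B ∧ B < b * f := by
  have hκ := kappa_pos hγ
  have hbf : 1 < b * f := by nlinarith
  have hbfpos : (0:ℝ) < b * f := by linarith
  have hphiFf : phiF γ f = kappa γ * (f - 1) := if_neg (by push_neg; linarith)
  have hphiBb : phiB γ b = shockPart γ b := if_neg (by push_neg; linarith)
  have hSb : 0 ≤ shockPart γ b := Real.sqrt_nonneg _
  have h1 : 1 < B := by
    by_contra h
    push_neg at h
    have e1 : phiB γ B = kappa γ * (B - 1) := if_pos h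
    have hq : B / (b * f) ≤ 1 := by
      rw [div_le_one hbfpos]; linarith
    have e2 : phiB γ (B / (b * f)) = kappa γ * (B / (b * f) - 1) := if_pos hq
    rw [e1, e2, hphiFf, hphiBb] at heq
    have e3 : b * f * (kappa γ * (B / (b * f) - 1)) = kappa γ * (B - b * f) := by
      field_simp
    rw [e3] at heq
    -- f * shockPart = κ(2B - 2 + f - bf) < 0, contradiction
    nlinarith [mul_nonneg (by linarith : (0:ℝ) ≤ f) hSb,
      mul_pos hκ (show (0:ℝ) < f * (b - 1) by nlinarith),
      mul_nonneg hκ.le (show (0:ℝ) ≤ 1 - B by linarith)]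
  refine ⟨h1, ?_⟩
  by_contra h
  push_neg at h  -- b * f ≤ B
  have e1 : phiB γ B = shockPart γ B := if_neg (by push_neg; linarith)
  have hq1 : 1 ≤ B / (b * f) := (one_le_div hbfpos).mpr h
  have e2 : 0 ≤ phiB γ (B / (b * f)) := phiB_nonneg hγ hq1
  rw [e1, hphiFf, hphiBb] at heq
  have hmono : shockPart γ (b * f) ≤ shockPart γ B := shockPart_mono hγ hbf.le h
  have hkey : f * shockPart γ b < shockPart γ (b * f) := key hγ hb hf
  nlinarith [mul_nonneg hbfpos.le e2, mul_pos hκ (show (0:ℝ) < f - 1 by linarith)]
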